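/- arXiv:1911.03788 — 4 statements merged into one kernel-verified Lean document; each statement's English description precedes it below -/
import Mathlib

section
/- Under hypotheses (H1) and (H2), setting θ = min{q₂, β}, the modified nonlinearity satisfies 0 < θ·F̄(t,x) ≤ ⟨∇F̄(t,x), x⟩ for all x ∈ ℝ^N with x ≠ 0 and a.e. t ∈ [0,T], where ∇F̄ denotes the gradient of F̄ in the second variable. -/
/-!
Write `r = ‖x‖`. The chain and product rules give the radial identity
`⟪∇F̄, x⟫ = m(r) ⟪∇F, x⟫ + r m'(r) (F - M₂ r^q₂) + (1 - m(r)) M₂ q₂ r^q₂`.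
For `r ≤ δ` the middle term is nonnegative, since `m` is nonincreasing on `(0, ∞)` and
`F ≤ M₂ r^q₂`, while the outer terms dominate `θ` times the two summands of `F̄` by (H2) and
`θ ≤ q₂`. For `r > δ` both `m` and `m'` vanish at `r`, so only `M₂ q₂ r^q₂ ≥ θ F̄ = θ M₂ r^q₂`
remains.
-/

open MeasureTheory Set Real
open scoped RealInnerProductSpace

section Cutoff

variable {E : Type*} [NormedAddCommGroup E] [InnerProductSpace ℝ E]

theorem hasFDerivAt_norm_of_ne_zero {x : E} (hx : x ≠ 0) :
    HasFDerivAt (‖·‖) (‖x‖⁻¹ • innerSL ℝ x) x := by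
  have h := (hasStrictFDerivAt_norm_sq x).hasFDerivAt.sqrt (by positivity)
  simp only [Real.sqrt_sq (norm_nonneg _)] at h
  convert h using 1
  ext v
  simp only [smul_apply, innerSL_apply_apply, smul_eq_mul, two_smul, add_apply]
  field_simp
  ring

theorem HasDerivAt.hasFDerivAt_comp_norm {g : ℝ → ℝ} {g' : ℝ} {x : E} (hg : HasDerivAt g g' ‖x‖)
    (hx : x ≠ 0) : HasFDerivAt (fun y => g ‖y‖) (g' • ‖x‖⁻¹ • innerSL ℝ x) x :=
  hg.comp_hasFDerivAt x (hasFDerivAt_norm_of_ne_zero hx)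

noncomputable def cutoffExtension (m : ℝ → ℝ) (f : E → ℝ) (M q : ℝ) (y : E) : ℝ :=
  m ‖y‖ * f y + (1 - m ‖y‖) * M * ‖y‖ ^ q

theorem inner_gradient_cutoffExtension_self [CompleteSpace E] {f : E → ℝ} {m : ℝ → ℝ} {x : E}
    (hx : x ≠ 0) (hf : DifferentiableAt ℝ f x) (hm : DifferentiableAt ℝ m ‖x‖) (M q : ℝ) :
    ⟪gradient (cutoffExtension m f M q) x, x⟫ =
      m ‖x‖ * ⟪gradient f x, x⟫ + ‖x‖ * deriv m ‖x‖ * (f x - M * ‖x‖ ^ q)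
        + (1 - m ‖x‖) * M * q * ‖x‖ ^ q := by
  have hr : 0 < ‖x‖ := norm_pos_iff.mpr hx
  have hm' := hm.hasDerivAt
  have hpow := Real.hasDerivAt_rpow_const (x := ‖x‖) (p := q) (Or.inl hr.ne')
  have hcut := ((hm'.const_sub 1).mul_const M).mul hpow
  have hg : HasFDerivAt (cutoffExtension m f M q) _ x :=
    ((hm'.hasFDerivAt_comp_norm hx).mul hf.hasFDerivAt).add (hcut.hasFDerivAt_comp_norm hx)
  have hrpow : ‖x‖ ^ (q - 1) * ‖x‖ = ‖x‖ ^ q := by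
    rw [← Real.rpow_add_one hr.ne', sub_add_cancel]
  simp only [inner_gradient_left, hg.fderiv, add_apply, smul_apply, smul_eq_mul,
    innerSL_apply_apply, real_inner_self_eq_norm_sq]
  field_simp
  linear_combination (1 - m ‖x‖) * M * q * hrpow

theorem cutoff_ambrosettiRabinowitz_of_bounds {w c F I P M q β θ : ℝ} (hw : w ∈ Icc (0 : ℝ) 1)
    (hc : c ≤ 0) (hF : 0 < F) (hFle : F ≤ M * P) (hI : β * F ≤ I) (hM : 0 < M) (hP : 0 < P)
    (hθ : 0 < θ) (hθq : θ ≤ q) (hθβ : θ ≤ β) :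
    0 < θ * (w * F + (1 - w) * M * P) ∧
      θ * (w * F + (1 - w) * M * P) ≤ w * I + c * (F - M * P) + (1 - w) * M * q * P := by
  obtain ⟨hw0, hw1⟩ := hw
  have hMP : 0 < M * P := mul_pos hM hP
  refine ⟨mul_pos hθ (by nlinarith), ?_⟩
  have hcF : 0 ≤ c * (F - M * P) := mul_nonneg_of_nonpos_of_nonpos hc (by linarith)
  have hθF : w * (θ * F) ≤ w * I := by gcongr; nlinarith
  have hθMP : θ * ((1 - w) * (M * P)) ≤ q * ((1 - w) * (M * P)) := by gcongr
  linarith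

theorem cutoffExtension_ambrosettiRabinowitz [CompleteSpace E] {f : E → ℝ} {m : ℝ → ℝ}
    {δ M q β θ : ℝ} (hf : Differentiable ℝ f) (hm : Differentiable ℝ m)
    (hm01 : ∀ s, m s ∈ Icc (0 : ℝ) 1) (hm_anti : ∀ s, 0 < s → deriv m s ≤ 0)
    (hm0 : ∀ s, δ ≤ s → m s = 0) (hfpos : ∀ x, x ≠ 0 → ‖x‖ ≤ δ → 0 < f x)
    (hfle : ∀ x, ‖x‖ ≤ δ → f x ≤ M * ‖x‖ ^ q) (hfAR : ∀ x, ‖x‖ ≤ δ → β * f x ≤ ⟪gradient f x, x⟫)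
    (hM : 0 < M) (hθ : 0 < θ) (hθq : θ ≤ q) (hθβ : θ ≤ β) {x : E} (hx : x ≠ 0) :
    0 < θ * cutoffExtension m f M q x ∧
      θ * cutoffExtension m f M q x ≤ ⟪gradient (cutoffExtension m f M q) x, x⟫ := by
  have hr : 0 < ‖x‖ := norm_pos_iff.mpr hx
  have hP : 0 < ‖x‖ ^ q := Real.rpow_pos_of_pos hr q
  rw [inner_gradient_cutoffExtension_self hx (hf x) (hm ‖x‖), cutoffExtension]
  rcases le_or_gt ‖x‖ δ with hin | hout
  · exact cutoff_ambrosettiRabinowitz_of_bounds (hm01 _)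
      (mul_nonpos_of_nonneg_of_nonpos hr.le (hm_anti _ hr))
      (hfpos x hx hin) (hfle x hin) (hfAR x hin) hM hP hθ hθq hθβ
  · have hm_zero : m =ᶠ[nhds ‖x‖] fun _ => 0 :=
      Filter.eventually_of_mem (Ioi_mem_nhds hout) fun s hs => hm0 s (le_of_lt hs)
    rw [hm_zero.eq_of_nhds, hm_zero.deriv_eq, deriv_const]
    simp only [mul_zero, zero_mul, zero_add, sub_zero, one_mul]
    have hMP : 0 < M * ‖x‖ ^ q := mul_pos hM hP
    exact ⟨mul_pos hθ hMP, by nlinarith⟩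

end Cutoff

theorem truncated_nonlinearity_AR_condition_general
    (T : ℝ) (N : ℕ) (p : ℕ)
    (δ : ℝ)
    (F : ℝ → EuclideanSpace ℝ (Fin N) → ℝ)
    (hFdiff : ∀ᵐ t ∂(volume.restrict (Icc 0 T)), ContDiff ℝ 1 (F t))
    (m : ℝ → ℝ) (hm : ContDiff ℝ 1 m)
    (hm01 : ∀ s, m s ∈ Icc (0:ℝ) 1)
    (hmderiv : ∀ s, s * deriv m s ≤ 0)
    (hm0 : ∀ s, δ ≤ |s| → m s = 0)
    (q₁ q₂ M₁ M₂ : ℝ)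
    (hq₂ : q₂ ∈ Ioo (((p : ℝ)) ^ 2) q₁)
    (hM₁ : 0 < M₁) (hM₂ : 0 < M₂)
    (hH1 : ∀ᵐ t ∂(volume.restrict (Icc 0 T)),
      ∀ x : EuclideanSpace ℝ (Fin N), ‖x‖ ≤ δ →
        M₁ * ‖x‖ ^ q₁ ≤ F t x ∧ F t x ≤ M₂ * ‖x‖ ^ q₂)
    (β : ℝ) (hβ : ((p : ℝ)) ^ 2 < β)
    (hH2 : ∀ᵐ t ∂(volume.restrict (Icc 0 T)),
      ∀ x : EuclideanSpace ℝ (Fin N), ‖x‖ ≤ δ →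
        0 ≤ β * F t x ∧ β * F t x ≤ ⟪gradient (F t) x, x⟫)
    (Fbar : ℝ → EuclideanSpace ℝ (Fin N) → ℝ)
    (hFbar : ∀ t x, Fbar t x = m ‖x‖ * F t x + (1 - m ‖x‖) * M₂ * ‖x‖ ^ q₂)
    (θ : ℝ) (hθ : θ = min q₂ β) :
    ∀ᵐ t ∂(volume.restrict (Icc 0 T)),
      ∀ x : EuclideanSpace ℝ (Fin N), x ≠ 0 →
        0 < θ * Fbar t x ∧ θ * Fbar t x ≤ ⟪gradient (Fbar t) x, x⟫ := by
  have hθ_pos : 0 < θ := hθ ▸ lt_min ((sq_nonneg _).trans_lt hq₂.1) ((sq_nonneg _).trans_lt hβ)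
  have hm_anti (s : ℝ) (hs : 0 < s) : deriv m s ≤ 0 := nonpos_of_mul_nonpos_right (hmderiv s) hs
  filter_upwards [hFdiff, hH1, hH2] with t hF hF_bounds hF_AR x hx
  rw [show Fbar t = cutoffExtension m (F t) M₂ q₂ from funext (hFbar t)]
  exact cutoffExtension_ambrosettiRabinowitz (hF.differentiable one_ne_zero)
    (hm.differentiable one_ne_zero) hm01 hm_anti (fun s hs => hm0 s (hs.trans (le_abs_self s)))
    (fun y _ hyδ => (by positivity : 0 < M₁ * ‖y‖ ^ q₁).trans_le (hF_bounds y hyδ).1)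
    (fun y hy => (hF_bounds y hy).2) (fun y hy => (hF_AR y hy).2)
    hM₂ hθ_pos (hθ ▸ min_le_left _ _) (hθ ▸ min_le_right _ _) hx

/-- Under hypotheses (H1) and (H2), setting `θ = min{q₂, β}`, the modified
nonlinearity satisfies `0 < θ·F̄(t,x) ≤ ⟨∇F̄(t,x), x⟩` for all `x ≠ 0` and a.e. `t ∈ [0,T]`. -/
theorem truncated_nonlinearity_AR_condition
    (T : ℝ) (hT : 0 < T) (N : ℕ) (hN : 0 < N) (p : ℕ) (hp : 1 < p)
    (δ : ℝ) (hδ : 0 < δ)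
    (F : ℝ → EuclideanSpace ℝ (Fin N) → ℝ)
    (hFdiff : ∀ᵐ t ∂(volume.restrict (Icc 0 T)), ContDiff ℝ 1 (F t))
    (hFmeas : ∀ x : EuclideanSpace ℝ (Fin N), Measurable (fun t => F t x))
    (m : ℝ → ℝ) (hm : ContDiff ℝ 1 m)
    (hm01 : ∀ s, m s ∈ Icc (0:ℝ) 1)
    (hmeven : ∀ s, m (-s) = m s)
    (hmderiv : ∀ s, s * deriv m s ≤ 0)
    (hm1 : ∀ s, |s| ≤ δ / 2 → m s = 1)
    (hm0 : ∀ s, δ ≤ |s| → m s = 0)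
    (q₁ q₂ M₁ M₂ : ℝ)
    (hq₁ : ((p : ℝ)) ^ 2 < q₁) (hq₂ : q₂ ∈ Ioo (((p : ℝ)) ^ 2) q₁)
    (hM₁ : 0 < M₁) (hM₂ : 0 < M₂)
    (hH1 : ∀ᵐ t ∂(volume.restrict (Icc 0 T)),
      ∀ x : EuclideanSpace ℝ (Fin N), ‖x‖ ≤ δ →
        M₁ * ‖x‖ ^ q₁ ≤ F t x ∧ F t x ≤ M₂ * ‖x‖ ^ q₂)
    (β : ℝ) (hβ : ((p : ℝ)) ^ 2 < β)
    (hH2 : ∀ᵐ t ∂(volume.restrict (Icc 0 T)),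
      ∀ x : EuclideanSpace ℝ (Fin N), ‖x‖ ≤ δ →
        0 ≤ β * F t x ∧ β * F t x ≤ ⟪gradient (F t) x, x⟫)
    (Fbar : ℝ → EuclideanSpace ℝ (Fin N) → ℝ)
    (hFbar : ∀ t x, Fbar t x = m ‖x‖ * F t x + (1 - m ‖x‖) * M₂ * ‖x‖ ^ q₂)
    (θ : ℝ) (hθ : θ = min q₂ β) :
    ∀ᵐ t ∂(volume.restrict (Icc 0 T)),
      ∀ x : EuclideanSpace ℝ (Fin N), x ≠ 0 →
        0 < θ * Fbar t x ∧ θ * Fbar t x ≤ ⟪gradient (Fbar t) x, x⟫ :=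
  truncated_nonlinearity_AR_condition_general T N p δ F hFdiff m hm hm01 hmderiv hm0 q₁ q₂ M₁ M₂ hq₂
    hM₁ hM₂ hH1 β hβ hH2 Fbar hFbar θ hθ
end

section
/- Under hypothesis (H0), the modified nonlinearity satisfies |F̄(t,x)| ≤ a₀·b(t) + M₂|x|^{q₂} and |∇F̄(t,x)| ≤ (1+m₀)a₀·b(t) + M₂q₂|x|^{q₂−1} + m₀M₂|x|^{q₂} for all x ∈ ℝ^N and a.e. t ∈ [0,T], where a₀ = max_{s∈[0,δ]} a(s) and m₀ = max_{s∈[δ/2,δ]} |m'(s)|. -/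
open MeasureTheory Set Real Filter Topology

/-! Where `m(|x|) = 1` the function `F̄` is `F`, where `m(|x|) = 0` it is `M₂|x|^{q₂}`, and in
between it is a convex combination of the two, which gives the bound on `F̄`. Differentiating,
`∇F̄ = m ∇F + (1 - m) ∇(M₂|x|^{q₂}) + m'(|x|) (F - M₂|x|^{q₂}) ∇|x|` with `|∇|x|| ≤ 1`; the terms
involving `F` or `m'` vanish unless `|x| ≤ δ`, where (H0) bounds `F` and `∇F` by `a₀ b(t)`.
At `x = 0`, where `|x|` is not differentiable, `m(|x|)` is locally constant. -/

structure IsCutoff (m : ℝ → ℝ) (δ : ℝ) : Prop where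
  mem_Icc : ∀ s, m s ∈ Icc (0 : ℝ) 1
  eq_one : ∀ s, |s| ≤ δ / 2 → m s = 1
  eq_zero : ∀ s, δ ≤ |s| → m s = 0

namespace IsCutoff

variable {m : ℝ → ℝ} {δ : ℝ}

theorem eventuallyEq_one (hm : IsCutoff m δ) {s : ℝ} (hs : |s| < δ / 2) :
    m =ᶠ[𝓝 s] fun _ => 1 := by
  filter_upwards [(isOpen_lt continuous_abs continuous_const).mem_nhds hs] with u hu
  exact hm.eq_one u hu.le

theorem deriv_eq_zero_of_lt_abs (hm : IsCutoff m δ) {s : ℝ} (hs : δ < |s|) : deriv m s = 0 := by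
  have hzero : m =ᶠ[𝓝 s] fun _ => 0 := by
    filter_upwards [(isOpen_lt continuous_const continuous_abs).mem_nhds hs] with u hu
    exact hm.eq_zero u hu.le
  rw [hzero.deriv_eq, deriv_const]

theorem abs_deriv_le (hm : IsCutoff m δ) {m₀ : ℝ}
    (hm₀ : IsGreatest ((fun s => |deriv m s|) '' Icc (δ / 2) δ) m₀) {s : ℝ} (hs : 0 ≤ s) :
    |deriv m s| ≤ m₀ := by
  have hm₀_nonneg : 0 ≤ m₀ := by
    obtain ⟨s, -, rfl⟩ := hm₀.1
    exact abs_nonneg _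
  rcases lt_or_ge s (δ / 2) with hlt | hge
  · rw [(hm.eventuallyEq_one (by rwa [abs_of_nonneg hs])).deriv_eq, deriv_const, abs_zero]
    exact hm₀_nonneg
  rcases le_or_gt s δ with hle | hgt
  · exact hm₀.2 ⟨s, ⟨hge, hle⟩, rfl⟩
  · rw [hm.deriv_eq_zero_of_lt_abs (by rwa [abs_of_nonneg hs]), abs_zero]
    exact hm₀_nonneg

theorem mul_le (hm : IsCutoff m δ) {r c A : ℝ} (hr : 0 ≤ r) (hc : 0 ≤ c) (hA : 0 ≤ A)
    (h : r ≤ δ → c ≤ A) : m r * c ≤ A := by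
  rcases le_or_gt r δ with hle | hgt
  · exact (mul_le_of_le_one_left hc (hm.mem_Icc r).2).trans (h hle)
  · rw [hm.eq_zero r (by rw [abs_of_nonneg hr]; exact hgt.le), zero_mul]
    exact hA

theorem abs_deriv_mul_le (hm : IsCutoff m δ) {m₀ r c A : ℝ} (hm₀ : |deriv m r| ≤ m₀)
    (hr : 0 ≤ r) (hc : 0 ≤ c) (hA : 0 ≤ A) (h : r ≤ δ → c ≤ A) :
    |deriv m r| * c ≤ m₀ * A := by
  rcases le_or_gt r δ with hle | hgt
  · exact mul_le_mul hm₀ (h hle) hc ((abs_nonneg _).trans hm₀)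
  · rw [hm.deriv_eq_zero_of_lt_abs (by rwa [abs_of_nonneg hr]), abs_zero, zero_mul]
    exact mul_nonneg ((abs_nonneg _).trans hm₀) hA

end IsCutoff

section Truncation

variable {E : Type*}

noncomputable def truncate [Norm E] (m : ℝ → ℝ) (M q : ℝ) (f : E → ℝ) (y : E) : ℝ :=
  m ‖y‖ * f y + (1 - m ‖y‖) * M * ‖y‖ ^ q

variable {m : ℝ → ℝ} {δ M q m₀ A : ℝ}

theorem abs_truncate_le [SeminormedAddCommGroup E] {f : E → ℝ} (hm : IsCutoff m δ) (hM : 0 ≤ M)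
    (hA : 0 ≤ A) (hfA : ∀ x, ‖x‖ ≤ δ → |f x| ≤ A) (x : E) :
    |truncate m M q f x| ≤ A + M * ‖x‖ ^ q := by
  obtain ⟨hm_nonneg, hm_le_one⟩ := hm.mem_Icc ‖x‖
  have hpow : 0 ≤ M * ‖x‖ ^ q := mul_nonneg hM (rpow_nonneg (norm_nonneg x) q)
  have hmf : m ‖x‖ * |f x| ≤ A := hm.mul_le (norm_nonneg x) (abs_nonneg _) hA (hfA x)
  calc |truncate m M q f x|
      ≤ |m ‖x‖ * f x| + |(1 - m ‖x‖) * (M * ‖x‖ ^ q)| := by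
        rw [truncate, mul_assoc (1 - m ‖x‖)]
        exact abs_add_le _ _
    _ = m ‖x‖ * |f x| + (1 - m ‖x‖) * (M * ‖x‖ ^ q) := by
        rw [abs_mul, abs_mul, abs_of_nonneg hm_nonneg, abs_of_nonneg (sub_nonneg.2 hm_le_one),
          abs_of_nonneg hpow]
    _ ≤ A + M * ‖x‖ ^ q := by nlinarith

variable [NormedAddCommGroup E] [InnerProductSpace ℝ E] {f : E → ℝ}

theorem hasFDerivAt_comp_norm {c : ℝ} {x : E} (hm : DifferentiableAt ℝ m ‖x‖)
    (h0 : m =ᶠ[𝓝 0] fun _ => c) :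
    HasFDerivAt (fun y : E => m ‖y‖) (deriv m ‖x‖ • fderiv ℝ (‖·‖) x) x := by
  rcases eq_or_ne x 0 with rfl | hx
  · have hcomp : (fun y : E => m ‖y‖) =ᶠ[𝓝 0] fun _ => c :=
      h0.comp_tendsto (continuous_norm.tendsto' 0 0 norm_zero)
    rw [norm_zero, h0.deriv_eq, deriv_const, zero_smul]
    exact (hasFDerivAt_const c 0).congr_of_eventuallyEq hcomp
  · exact hm.hasDerivAt.comp_hasFDerivAt x
      ((contDiffAt_norm ℝ hx).differentiableAt one_ne_zero).hasFDerivAt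

theorem hasFDerivAt_truncate {m' f' : E →L[ℝ] ℝ} {x : E}
    (hq : 1 < q) (hm : HasFDerivAt (fun y : E => m ‖y‖) m' x) (hf : HasFDerivAt f f' x) :
    HasFDerivAt (truncate m M q f)
      (m ‖x‖ • f' + (f x - M * ‖x‖ ^ q) • m' +
        ((1 - m ‖x‖) * M) • fderiv ℝ (fun y : E => ‖y‖ ^ q) x) x := by
  have hpow := (differentiable_norm_rpow (E := E) hq x).hasFDerivAt
  refine ((hm.mul hf).add
    ((((hasFDerivAt_const 1 x).sub hm).mul_const M).mul hpow)).congr_fderiv ?_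
  simp only [Pi.sub_apply]
  module

theorem norm_fderiv_truncate_le (hm : IsCutoff m δ) (hδ : 0 < δ) (hmd : Differentiable ℝ m)
    (hm₀ : ∀ s, 0 ≤ s → |deriv m s| ≤ m₀) (hq : 1 < q) (hM : 0 ≤ M) (hf : Differentiable ℝ f)
    (hA : 0 ≤ A) (hfA : ∀ x, ‖x‖ ≤ δ → |f x| ≤ A ∧ ‖fderiv ℝ f x‖ ≤ A) (x : E) :
    ‖fderiv ℝ (truncate m M q f) x‖ ≤
      (1 + m₀) * A + M * q * ‖x‖ ^ (q - 1) + m₀ * M * ‖x‖ ^ q := by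
  set r := ‖x‖ with hr
  have hr0 : 0 ≤ r := norm_nonneg x
  obtain ⟨hm_nonneg, hm_le_one⟩ := hm.mem_Icc r
  have hpow : 0 ≤ M * r ^ q := mul_nonneg hM (rpow_nonneg hr0 q)
  have hm' : |deriv m r| ≤ m₀ := hm₀ r hr0
  have hnorm : ‖fderiv ℝ (‖·‖) x‖ ≤ 1 := by
    simpa using norm_fderiv_le_of_lipschitz ℝ (lipschitzWith_one_norm (E := E)) (x₀ := x)
  have hD := hasFDerivAt_truncate (M := M) hq
    (hasFDerivAt_comp_norm (hmd r) (hm.eventuallyEq_one (by rw [abs_zero]; positivity)))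
    (hf x).hasFDerivAt
  have hF_term : ‖m r • fderiv ℝ f x‖ ≤ A := by
    rw [norm_smul, norm_of_nonneg hm_nonneg]
    exact hm.mul_le hr0 (norm_nonneg _) hA fun h => (hfA x h).2
  have hcutoff_term :
      ‖(f x - M * r ^ q) • deriv m r • fderiv ℝ (‖·‖) x‖ ≤ m₀ * A + m₀ * (M * r ^ q) := by
    have hfx : |deriv m r| * |f x| ≤ m₀ * A :=
      hm.abs_deriv_mul_le hm' hr0 (abs_nonneg _) hA fun h => (hfA x h).1
    calc ‖(f x - M * r ^ q) • deriv m r • fderiv ℝ (‖·‖) x‖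
        = |f x - M * r ^ q| * (|deriv m r| * ‖fderiv ℝ (‖·‖) x‖) := by
          rw [norm_smul, norm_smul, norm_eq_abs, norm_eq_abs]
      _ ≤ (|f x| + M * r ^ q) * |deriv m r| := by
          gcongr
          · exact (abs_sub _ _).trans_eq (by rw [abs_of_nonneg hpow])
          · exact mul_le_of_le_one_right (abs_nonneg _) hnorm
      _ ≤ m₀ * A + m₀ * (M * r ^ q) := by nlinarith [mul_le_mul_of_nonneg_right hm' hpow]
  have hpow_term : ‖((1 - m r) * M) • fderiv ℝ (fun y : E => ‖y‖ ^ q) x‖ ≤ M * q * r ^ (q - 1) := by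
    rw [norm_smul, norm_fderiv_norm_id_rpow x hq,
      norm_of_nonneg (mul_nonneg (sub_nonneg.2 hm_le_one) hM), ← hr]
    have : 0 ≤ M * q * r ^ (q - 1) := by positivity
    nlinarith
  rw [hD.fderiv]
  calc _ ≤ ‖m r • fderiv ℝ f x‖ + ‖(f x - M * r ^ q) • deriv m r • fderiv ℝ (‖·‖) x‖ +
          ‖((1 - m r) * M) • fderiv ℝ (fun y : E => ‖y‖ ^ q) x‖ := norm_add₃_le
    _ ≤ A + (m₀ * A + m₀ * (M * r ^ q)) + M * q * r ^ (q - 1) := by gcongr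
    _ = _ := by ring

end Truncation

theorem norm_gradient {E : Type*} [NormedAddCommGroup E] [InnerProductSpace ℝ E]
    [CompleteSpace E] (f : E → ℝ) (x : E) : ‖gradient f x‖ = ‖fderiv ℝ f x‖ :=
  (InnerProductSpace.toDual ℝ E).symm.norm_map _

theorem truncated_nonlinearity_global_growth_general
    (T : ℝ) (N : ℕ)
    (δ : ℝ) (hδ : 0 < δ)
    (F : ℝ → EuclideanSpace ℝ (Fin N) → ℝ)
    (hFdiff : ∀ᵐ t ∂(volume.restrict (Icc 0 T)), ContDiff ℝ 1 (F t))
    (m : ℝ → ℝ) (hm : ContDiff ℝ 1 m)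
    (hm01 : ∀ s, m s ∈ Icc (0:ℝ) 1)
    (hm1 : ∀ s, |s| ≤ δ / 2 → m s = 1)
    (hm0 : ∀ s, δ ≤ |s| → m s = 0)
    (q₂ M₂ : ℝ) (hq₂ : 1 < q₂) (hM₂ : 0 < M₂)
    (Fbar : ℝ → EuclideanSpace ℝ (Fin N) → ℝ)
    (hFbar : ∀ t x, Fbar t x = m ‖x‖ * F t x + (1 - m ‖x‖) * M₂ * ‖x‖ ^ q₂)
    -- (H0): a ∈ C(ℝ⁺,ℝ⁺), b ∈ L¹([0,T];ℝ⁺) controlling F and ∇F for |x| ≤ δ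
    (a : ℝ → ℝ)
    (b : ℝ → ℝ) (hb0 : ∀ᵐ t ∂(volume.restrict (Icc 0 T)), 0 ≤ b t)
    (hH0 : ∀ᵐ t ∂(volume.restrict (Icc 0 T)),
      ∀ x : EuclideanSpace ℝ (Fin N), ‖x‖ ≤ δ →
        |F t x| ≤ a ‖x‖ * b t ∧ ‖gradient (F t) x‖ ≤ a ‖x‖ * b t)
    (a₀ : ℝ) (ha₀ : IsGreatest (a '' Icc 0 δ) a₀)
    (m₀ : ℝ) (hm₀ : IsGreatest ((fun s => |deriv m s|) '' Icc (δ / 2) δ) m₀) :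
    ∀ᵐ t ∂(volume.restrict (Icc 0 T)),
      ∀ x : EuclideanSpace ℝ (Fin N),
        |Fbar t x| ≤ a₀ * b t + M₂ * ‖x‖ ^ q₂ ∧
        ‖gradient (Fbar t) x‖ ≤
          (1 + m₀) * a₀ * b t + M₂ * q₂ * ‖x‖ ^ (q₂ - 1) + m₀ * M₂ * ‖x‖ ^ q₂ := by
  have hcut : IsCutoff m δ := ⟨hm01, hm1, hm0⟩
  have hFbar_eq : ∀ t, Fbar t = truncate m M₂ q₂ (F t) := fun t => funext (hFbar t)
  filter_upwards [hFdiff, hb0, hH0] with t hFt hbt hH0t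
  have hbound : ∀ x : EuclideanSpace ℝ (Fin N), ‖x‖ ≤ δ →
      |F t x| ≤ a₀ * b t ∧ ‖fderiv ℝ (F t) x‖ ≤ a₀ * b t := by
    intro x hx
    have ha : a ‖x‖ * b t ≤ a₀ * b t :=
      mul_le_mul_of_nonneg_right (ha₀.2 ⟨‖x‖, ⟨norm_nonneg x, hx⟩, rfl⟩) hbt
    rw [← norm_gradient]
    exact ⟨(hH0t x hx).1.trans ha, (hH0t x hx).2.trans ha⟩
  have hA : 0 ≤ a₀ * b t := (abs_nonneg _).trans (hbound 0 (by simpa using hδ.le)).1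
  intro x
  rw [hFbar_eq, norm_gradient, mul_assoc (1 + m₀)]
  exact ⟨abs_truncate_le hcut hM₂.le hA (fun y hy => (hbound y hy).1) x,
    norm_fderiv_truncate_le hcut hδ (hm.differentiable one_ne_zero)
      (fun s hs => hcut.abs_deriv_le hm₀ hs) hq₂ hM₂.le (hFt.differentiable one_ne_zero) hA
      hbound x⟩

/-- Under hypothesis (H0), the modified nonlinearity satisfies
`|F̄(t,x)| ≤ a₀·b(t) + M₂|x|^{q₂}` and
`|∇F̄(t,x)| ≤ (1+m₀)a₀·b(t) + M₂q₂|x|^{q₂−1} + m₀M₂|x|^{q₂}`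
for all `x ∈ ℝ^N` and a.e. `t ∈ [0,T]`, where `a₀ = max_{s∈[0,δ]} a(s)` and
`m₀ = max_{s∈[δ/2,δ]} |m'(s)|`. -/
theorem truncated_nonlinearity_global_growth
    (T : ℝ) (hT : 0 < T) (N : ℕ) (hN : 0 < N) (p : ℕ) (hp : 1 < p)
    (δ : ℝ) (hδ : 0 < δ)
    (F : ℝ → EuclideanSpace ℝ (Fin N) → ℝ)
    (hFdiff : ∀ᵐ t ∂(volume.restrict (Icc 0 T)), ContDiff ℝ 1 (F t))
    (hFmeas : ∀ x : EuclideanSpace ℝ (Fin N), Measurable (fun t => F t x))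
    (m : ℝ → ℝ) (hm : ContDiff ℝ 1 m)
    (hm01 : ∀ s, m s ∈ Icc (0:ℝ) 1)
    (hmeven : ∀ s, m (-s) = m s)
    (hmderiv : ∀ s, s * deriv m s ≤ 0)
    (hm1 : ∀ s, |s| ≤ δ / 2 → m s = 1)
    (hm0 : ∀ s, δ ≤ |s| → m s = 0)
    (q₂ M₂ : ℝ) (hq₂ : 1 < q₂) (hM₂ : 0 < M₂)
    (Fbar : ℝ → EuclideanSpace ℝ (Fin N) → ℝ)
    (hFbar : ∀ t x, Fbar t x = m ‖x‖ * F t x + (1 - m ‖x‖) * M₂ * ‖x‖ ^ q₂)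
    -- (H0): a ∈ C(ℝ⁺,ℝ⁺), b ∈ L¹([0,T];ℝ⁺) controlling F and ∇F for |x| ≤ δ
    (a : ℝ → ℝ) (ha : ContinuousOn a (Ici 0)) (ha0 : ∀ s ∈ Ici (0:ℝ), 0 ≤ a s)
    (b : ℝ → ℝ) (hb : IntegrableOn b (Icc 0 T)) (hb0 : ∀ᵐ t ∂(volume.restrict (Icc 0 T)), 0 ≤ b t)
    (hH0 : ∀ᵐ t ∂(volume.restrict (Icc 0 T)),
      ∀ x : EuclideanSpace ℝ (Fin N), ‖x‖ ≤ δ →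
        |F t x| ≤ a ‖x‖ * b t ∧ ‖gradient (F t) x‖ ≤ a ‖x‖ * b t)
    (a₀ : ℝ) (ha₀ : IsGreatest (a '' Icc 0 δ) a₀)
    (m₀ : ℝ) (hm₀ : IsGreatest ((fun s => |deriv m s|) '' Icc (δ / 2) δ) m₀) :
    ∀ᵐ t ∂(volume.restrict (Icc 0 T)),
      ∀ x : EuclideanSpace ℝ (Fin N),
        |Fbar t x| ≤ a₀ * b t + M₂ * ‖x‖ ^ q₂ ∧
        ‖gradient (Fbar t) x‖ ≤
          (1 + m₀) * a₀ * b t + M₂ * q₂ * ‖x‖ ^ (q₂ - 1) + m₀ * M₂ * ‖x‖ ^ q₂ :=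
  truncated_nonlinearity_global_growth_general T N δ hδ F hFdiff m hm hm01 hm1 hm0 q₂ M₂ hq₂ hM₂
    Fbar hFbar a b hb0 hH0 a₀ ha₀ m₀ hm₀
end

section
/- Let a, b, c, λ > 0 be reals, p > 1 an integer, and q₁ > 0 a real. If λ > (a + b·c)^{q₁(p−1)}, then the function f₁(s) = (1/(b·p²))·(a + b·c·s^p)^p − λ^{1/q₁}·c·s^p/p − a^p/(b·p²) satisfies f₁(s) < 0 for every s ∈ (0,1], and f₁(0) = 0. -/
/-!
Writing `t = s ^ p`, the quantity `b p² f₁(s)` equals `(a + bct)^p - a^p - p λ^{1/q₁} bct`.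
The mean value bound estimates the difference of powers by `p (a + bc)^{p-1} bct`, and the
hypothesis on `λ` says exactly that `(a + bc)^{p-1} < λ^{1/q₁}`.
-/

open Set

theorem rpow_lt_rpow_one_div_of_rpow_mul_lt {A lam q r : ℝ} (hA : 0 ≤ A) (hq : 0 < q)
    (h : A ^ (q * r) < lam) : A ^ r < lam ^ (1 / q) := by
  calc A ^ r = (A ^ (q * r)) ^ (1 / q) := by
        rw [← Real.rpow_mul hA]; field_simp
    _ < lam ^ (1 / q) := Real.rpow_lt_rpow (by positivity) h (by positivity)

theorem add_pow_sub_pow_lt {a d L : ℝ} {n : ℕ} (ha : 0 ≤ a) (hd : 0 < d) (hn : n ≠ 0)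
    (hL : (a + d) ^ (n - 1) < L) : (a + d) ^ n - a ^ n < n * L * d := by
  have hmax : max |a + d| |a| = a + d := by
    rw [abs_of_pos (by linarith), abs_of_nonneg ha, max_eq_left (by linarith)]
  calc (a + d) ^ n - a ^ n ≤ |(a + d) ^ n - a ^ n| := le_abs_self _
    _ ≤ |a + d - a| * n * max |a + d| |a| ^ (n - 1) := abs_pow_sub_pow_le _ _ _
    _ = n * (a + d) ^ (n - 1) * d := by
        rw [hmax, add_sub_cancel_left, abs_of_pos hd]; ring
    _ < n * L * d := by gcongr

theorem mountain_pass_level_auxiliary_negative_general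
    (a b c lam : ℝ) (ha : 0 < a) (hb : 0 < b) (hc : 0 < c)
    (p : ℕ) (hp : 1 < p) (q₁ : ℝ) (hq₁ : 0 < q₁)
    (hlarge : (a + b * c) ^ (q₁ * ((p : ℝ) - 1)) < lam)
    (f₁ : ℝ → ℝ)
    (hf₁ : ∀ s, f₁ s = 1 / (b * (p : ℝ) ^ 2) * (a + b * c * s ^ p) ^ p
        - lam ^ (1 / q₁) * c * s ^ p / (p : ℝ) - a ^ p / (b * (p : ℝ) ^ 2)) :
    f₁ 0 = 0 ∧ ∀ s ∈ Ioc (0:ℝ) 1, f₁ s < 0 := by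
  have hp0 : p ≠ 0 := by omega
  set L := lam ^ (1 / q₁)
  have hthreshold : (a + b * c) ^ (p - 1) < L := by
    have h := rpow_lt_rpow_one_div_of_rpow_mul_lt (by positivity) hq₁ hlarge
    rwa [← Nat.cast_pred (by omega), Real.rpow_natCast] at h
  refine ⟨by rw [hf₁]; simp [hp0]; ring, ?_⟩
  rintro s ⟨hs0, hs1⟩
  have hd : b * c * s ^ p ≤ b * c :=
    mul_le_of_le_one_right (by positivity) (pow_le_one₀ hs0.le hs1)
  have hgap := add_pow_sub_pow_lt ha.le (by positivity : 0 < b * c * s ^ p) hp0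
    ((pow_le_pow_left₀ (by positivity) (by linarith) _).trans_lt hthreshold)
  have hf : f₁ s = ((a + b * c * s ^ p) ^ p - a ^ p - p * L * (b * c * s ^ p))
      / (b * (p : ℝ) ^ 2) := by
    rw [hf₁]; field_simp; ring
  rw [hf]
  exact div_neg_of_neg_of_pos (by linarith) (by positivity)

/-- If `λ > (a + b·c)^{q₁(p−1)}`, then
`f₁(s) = (1/(bp²))(a + b·c·s^p)^p − λ^{1/q₁}·c·s^p/p − a^p/(bp²)` satisfies `f₁(s) < 0` for
every `s ∈ (0,1]`, and `f₁(0) = 0`. -/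
theorem mountain_pass_level_auxiliary_negative
    (a b c lam : ℝ) (ha : 0 < a) (hb : 0 < b) (hc : 0 < c) (hlam : 0 < lam)
    (p : ℕ) (hp : 1 < p) (q₁ : ℝ) (hq₁ : 0 < q₁)
    (hlarge : (a + b * c) ^ (q₁ * ((p : ℝ) - 1)) < lam)
    (f₁ : ℝ → ℝ)
    (hf₁ : ∀ s, f₁ s = 1 / (b * (p : ℝ) ^ 2) * (a + b * c * s ^ p) ^ p
        - lam ^ (1 / q₁) * c * s ^ p / (p : ℝ) - a ^ p / (b * (p : ℝ) ^ 2)) :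
    f₁ 0 = 0 ∧ ∀ s ∈ Ioc (0:ℝ) 1, f₁ s < 0 :=
  mountain_pass_level_auxiliary_negative_general a b c lam ha hb hc p hp q₁ hq₁ hlarge f₁ hf₁
end

section
/- Let a, b > 0 be reals, p > 1 an integer, and θ > p² a real. Then for every real x ≥ 0, (a + b·x)^{p−1}·((a + b·x)/(b·p²) − x/θ) − a^p/(b·p²) ≥ a^{p−1}·(1/p² − 1/θ)·x. -/
/-! Write `n = p - 1`, `q = p²` and `c = a + b x ≥ a`. Since
`c^{n+1} - a^{n+1} = c^n (c - a) + a (c^n - a^n) ≥ c^n b x`, the right-hand side is at least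
`c^n (1/q - 1/θ) x`, and `c^n ≥ a^n` together with `q < θ` finishes. -/

theorem pow_mul_sub_le_pow_succ_sub_pow_succ {a c : ℝ} (ha : 0 ≤ a) (hac : a ≤ c) (n : ℕ) :
    c ^ n * (c - a) ≤ c ^ (n + 1) - a ^ (n + 1) := by
  have hpow : a ^ n ≤ c ^ n := pow_le_pow_left₀ ha hac n
  calc c ^ n * (c - a) ≤ c ^ n * (c - a) + a * (c ^ n - a ^ n) :=
        le_add_of_nonneg_right (mul_nonneg ha (sub_nonneg.mpr hpow))
    _ = c ^ (n + 1) - a ^ (n + 1) := by ring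

theorem pow_mul_one_div_sub_one_div_mul_le {a b q θ x : ℝ} (ha : 0 ≤ a) (hb : 0 < b)
    (hq : 0 < q) (hqθ : q < θ) (hx : 0 ≤ x) (n : ℕ) :
    a ^ n * (1 / q - 1 / θ) * x ≤
      (a + b * x) ^ n * ((a + b * x) / (b * q) - x / θ) - a ^ (n + 1) / (b * q) := by
  set c := a + b * x with hc
  have hac : a ≤ c := le_add_of_nonneg_right (mul_nonneg hb.le hx)
  have hgap : 0 ≤ 1 / q - 1 / θ := sub_nonneg.mpr (one_div_le_one_div_of_le hq hqθ.le)
  calc a ^ n * (1 / q - 1 / θ) * x ≤ c ^ n * (1 / q - 1 / θ) * x := by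
        gcongr
    _ = c ^ n * (c - a) / (b * q) - c ^ n * x / θ := by
        rw [hc]; field_simp; ring
    _ ≤ (c ^ (n + 1) - a ^ (n + 1)) / (b * q) - c ^ n * x / θ := by
        gcongr; exact pow_mul_sub_le_pow_succ_sub_pow_succ ha hac n
    _ = c ^ n * (c / (b * q) - x / θ) - a ^ (n + 1) / (b * q) := by ring

/-- For reals `a, b > 0`, an integer `p > 1` and a real `θ > p²`, every
`x ≥ 0` satisfies
`(a + bx)^{p−1}((a + bx)/(bp²) − x/θ) − a^p/(bp²) ≥ a^{p−1}(1/p² − 1/θ)x`. -/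
theorem palais_smale_coercivity_estimate
    (a b : ℝ) (ha : 0 < a) (hb : 0 < b) (p : ℕ) (hp : 1 < p)
    (θ : ℝ) (hθ : ((p : ℝ)) ^ 2 < θ) :
    ∀ x : ℝ, 0 ≤ x →
      a ^ (p - 1) * (1 / (p : ℝ) ^ 2 - 1 / θ) * x ≤
        (a + b * x) ^ (p - 1) * ((a + b * x) / (b * (p : ℝ) ^ 2) - x / θ)
          - a ^ p / (b * (p : ℝ) ^ 2) := by
  intro x hx
  obtain ⟨n, rfl⟩ : ∃ n, p = n + 1 := ⟨p - 1, by omega⟩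
  simpa only [Nat.add_sub_cancel] using
    pow_mul_one_div_sub_one_div_mul_le ha.le hb (by positivity) hθ hx n
end
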